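/- Let G be a finite weighted graph with U(1)-signature s and μ : V → ℝ₊. For every nonzero f : V → ℂ there exists t' ∈ [0, max_u |f(u)|²] such that the level set V^f(√t') = { u : |f(u)| ≥ √t' } satisfies (ι^s(V^f(√t')) + |E(V^f(√t'), complement)|) / vol_μ(V^f(√t')) ≤ (3/2) √(2 d_μ R_μ^s(f)), where d_μ = max_u (Σ_{v~u} w_{uv})/μ(u). -/

import Mathlib

/-!
Write `f = |f| τ` with `τ` unit-valued and put `a = |f|²`. A discrete layer-cake decomposition
(weights `δ_t > 0` on the positive values `t` of `a` with `∑_{t ≤ x} δ_t = x`) averages over the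
superlevel sets `{a ≥ t}`: their volumes add up to `∑ a μ`, while, bounding the frustration of
each level set by the switching `τ`, frustration plus boundary add up to at most
`½ ∑ w (min(a_u, a_v) |τ_u - s_{uv} τ_v| + |a_u - a_v|)`. A two-point inequality bounds each edge
term by `(3/2) |f_u - s_{uv} f_v| (|f_u| + |f_v|)`, and Cauchy–Schwarz together with
`∑ w (|f_u| + |f_v|)² ≤ 4 d_μ ∑ a μ` turns the total into `(3/2) √(2 d_μ R) ∑ a μ`. Some level set
is therefore at least as good as the average.
-/

open Finset

/-- Rayleigh quotient of `f` for the magnetic Laplacian with weights `w`,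
vertex measure `μ` and signature `s` (each unordered edge counted once). -/
noncomputable def rayleigh {V : Type*} [Fintype V] (G : SimpleGraph V) [DecidableRel G.Adj]
    (w : V → V → ℝ) (μ : V → ℝ) (s : V → V → ℂ) (f : V → ℂ) : ℝ :=
  ((1 / 2) * ∑ u : V, ∑ v : V, if G.Adj u v then w u v * ‖f u - s u v * f v‖ ^ 2 else 0) /
    (∑ u : V, ‖f u‖ ^ 2 * μ u)

/-- The first eigenvalue of the magnetic Laplacian, characterized by the
variational (min-max) principle as the infimum of Rayleigh quotients. -/
noncomputable def lam1 {V : Type*} [Fintype V] (G : SimpleGraph V) [DecidableRel G.Adj]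
    (w : V → V → ℝ) (μ : V → ℝ) (s : V → V → ℂ) : ℝ :=
  sInf { x : ℝ | ∃ f : V → ℂ, f ≠ 0 ∧ x = rayleigh G w μ s f }

/-- Frustration index of `V1` with `U(1)`-valued switching functions. -/
noncomputable def frusIdx {V : Type*} [Fintype V] (G : SimpleGraph V) [DecidableRel G.Adj]
    (w : V → V → ℝ) (s : V → V → ℂ) (V1 : Finset V) : ℝ :=
  sInf { x : ℝ | ∃ τ : V → ℂ, (∀ u, ‖τ u‖ = 1) ∧
    x = (1 / 2) * ∑ u ∈ V1, ∑ v ∈ V1, if G.Adj u v then w u v * ‖τ u - s u v * τ v‖ else 0 }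

/-- Weighted boundary measure `|E(V1, V1ᶜ)|`. -/
noncomputable def bdry {V : Type*} [Fintype V] [DecidableEq V] (G : SimpleGraph V)
    [DecidableRel G.Adj] (w : V → V → ℝ) (V1 : Finset V) : ℝ :=
  ∑ u ∈ V1, ∑ v ∈ V1ᶜ, if G.Adj u v then w u v else 0

/-- `μ`-volume of `V1`. -/
noncomputable def vol {V : Type*} [Fintype V] (μ : V → ℝ) (V1 : Finset V) : ℝ :=
  ∑ u ∈ V1, μ u

/-- The Cheeger constant `h₁ˢ(μ)`. -/
noncomputable def cheeger1 {V : Type*} [Fintype V] [DecidableEq V] (G : SimpleGraph V)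
    [DecidableRel G.Adj] (w : V → V → ℝ) (μ : V → ℝ) (s : V → V → ℂ) : ℝ :=
  sInf { x : ℝ | ∃ V1 : Finset V, V1.Nonempty ∧
    x = (frusIdx G w s V1 + bdry G w V1) / vol μ V1 }

/-- Maximal `μ`-degree `d_μ`. -/
noncomputable def dmu {V : Type*} [Fintype V] (G : SimpleGraph V) [DecidableRel G.Adj]
    (w : V → V → ℝ) (μ : V → ℝ) : ℝ :=
  ⨆ u : V, (∑ v : V, if G.Adj u v then w u v else 0) / μ u


theorem exists_layer_weights (T : Finset ℝ) (hT : ∀ x ∈ T, 0 < x) :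
    ∃ δ : ℝ → ℝ, (∀ t ∈ T, 0 < δ t) ∧ ∀ x ∈ T, ∑ t ∈ T with t ≤ x, δ t = x := by
  induction T using Finset.induction_on_max with
  | empty => simp
  | insert m T hlt ih =>
    obtain ⟨δ, hδ_pos, hδ_sum⟩ := ih fun x hx => hT x (mem_insert_of_mem hx)
    have hmT : m ∉ T := fun hm => (hlt m hm).false
    have hsum_lt : ∑ t ∈ T, δ t < m := by
      rcases T.eq_empty_or_nonempty with rfl | hne
      · simpa using hT m (mem_insert_self m ∅)
      · have hmax := hδ_sum _ (T.max'_mem hne)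
        rw [filter_true_of_mem fun t ht => T.le_max' t ht] at hmax
        exact hmax ▸ hlt _ (T.max'_mem hne)
    -- the new top level `m` gets the gap between `m` and the previous top level `∑ t ∈ T, δ t`
    set δ' := Function.update δ m (m - ∑ t ∈ T, δ t)
    have hδ' : ∀ t ∈ T, δ' t = δ t := fun t ht =>
      Function.update_of_ne (ne_of_mem_of_not_mem ht hmT) _ _
    refine ⟨δ', fun t ht => ?_, fun x hx => ?_⟩
    · rcases mem_insert.mp ht with rfl | ht
      · simpa [δ'] using hsum_lt
      · exact hδ' t ht ▸ hδ_pos t ht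
    · rcases mem_insert.mp hx with rfl | hx
      · rw [filter_true_of_mem fun t ht => (mem_insert.mp ht).elim le_of_eq fun ht => (hlt t ht).le,
          sum_insert hmT, sum_congr rfl hδ']
        simp [δ']
      · rw [filter_insert, if_neg (not_le.mpr (hlt x hx))]
        exact (sum_congr rfl fun t ht => hδ' t (mem_filter.mp ht).1).trans (hδ_sum x hx)

theorem exists_layer_decomposition {ι : Type*} [Fintype ι] (a : ι → ℝ) (ha : ∀ i, 0 ≤ a i) :
    ∃ (T : Finset ℝ) (δ : ℝ → ℝ), (∀ t ∈ T, 0 < δ t ∧ ∃ i, a i = t) ∧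
      ∀ i, ∑ t ∈ T with t ≤ a i, δ t = a i := by
  obtain ⟨δ, hδ_pos, hδ⟩ := exists_layer_weights {t ∈ univ.image a | 0 < t} fun t ht =>
    (mem_filter.mp ht).2
  refine ⟨_, δ, fun t ht => ⟨hδ_pos t ht, by simpa using (mem_filter.mp ht).1⟩, fun i => ?_⟩
  rcases (ha i).eq_or_lt with h0 | hpos
  · rw [← h0, sum_eq_zero fun t ht => ?_]
    simp only [mem_filter] at ht
    linarith [ht.1.2, ht.2]
  · exact hδ (a i) (mem_filter.mpr ⟨mem_image_of_mem a (mem_univ i), hpos⟩)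

section Layers

variable {ι : Type*} [Fintype ι] {a : ι → ℝ} {T : Finset ℝ} {δ : ℝ → ℝ}

theorem sum_layers_sum_filter (hδ : ∀ i, ∑ t ∈ T with t ≤ a i, δ t = a i) (h : ι → ℝ) :
    ∑ t ∈ T, δ t * ∑ i with t ≤ a i, h i = ∑ i, h i * a i := by
  simp_rw [sum_filter, mul_sum]
  rw [sum_comm]
  refine sum_congr rfl fun i _ => ?_
  conv_rhs => rw [← hδ i, sum_filter, mul_sum]
  exact sum_congr rfl fun t _ => by split_ifs <;> ring

theorem sum_layers_sum_sum (hδ : ∀ i, ∑ t ∈ T with t ≤ a i, δ t = a i) (g : ι → ι → ℝ) :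
    ∑ t ∈ T, δ t * ∑ i with t ≤ a i, ∑ j with t ≤ a j, g i j =
      ∑ i, ∑ j, g i j * min (a i) (a j) := by
  have hδ_min : ∀ p : ι × ι, ∑ t ∈ T with t ≤ min (a p.1) (a p.2), δ t = min (a p.1) (a p.2) :=
    fun p => by rcases min_choice (a p.1) (a p.2) with h | h <;> rw [h] <;> exact hδ _
  have h_prod : ∀ t, ∑ i with t ≤ a i, ∑ j with t ≤ a j, g i j =
      ∑ p : ι × ι with t ≤ min (a p.1) (a p.2), g p.1 p.2 := fun t => by
    simp_rw [le_min_iff, sum_filter, Fintype.sum_prod_type, ite_and]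
    exact sum_congr rfl fun i _ => by split_ifs <;> simp
  simp_rw [h_prod, sum_layers_sum_filter hδ_min, Fintype.sum_prod_type]

theorem sum_layers_sum_sum_compl [DecidableEq ι] (hδ : ∀ i, ∑ t ∈ T with t ≤ a i, δ t = a i)
    (g : ι → ι → ℝ) :
    ∑ t ∈ T, δ t * ∑ i with t ≤ a i, ∑ j ∈ ({j | t ≤ a j} : Finset ι)ᶜ, g i j =
      ∑ i, ∑ j, g i j * (a i - min (a i) (a j)) := by
  have h_compl : ∀ t, ∑ i with t ≤ a i, ∑ j ∈ ({j | t ≤ a j} : Finset ι)ᶜ, g i j =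
      ∑ i with t ≤ a i, ∑ j, g i j - ∑ i with t ≤ a i, ∑ j with t ≤ a j, g i j := fun t => by
    rw [← sum_sub_distrib]
    exact sum_congr rfl fun i _ => eq_sub_of_add_eq (sum_compl_add_sum _ _)
  simp_rw [h_compl, mul_sub, sum_sub_distrib, sum_layers_sum_filter hδ, sum_layers_sum_sum hδ,
    sum_mul]

end Layers

theorem norm_smul_sub_smul_sq {E : Type*} [NormedAddCommGroup E] [InnerProductSpace ℝ E]
    (x y : ℝ) {σ₁ σ₂ : E} (h₁ : ‖σ₁‖ = 1) (h₂ : ‖σ₂‖ = 1) :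
    ‖x • σ₁ - y • σ₂‖ ^ 2 = (x - y) ^ 2 + x * y * ‖σ₁ - σ₂‖ ^ 2 := by
  rw [norm_sub_sq_real, norm_sub_sq_real, norm_smul, norm_smul, real_inner_smul_left,
    real_inner_smul_right, h₁, h₂, mul_pow, mul_pow, Real.norm_eq_abs, Real.norm_eq_abs, sq_abs,
    sq_abs]
  ring

theorem min_sq_mul_add_abs_sq_sub_sq_le {x y : ℝ} (hx : 0 ≤ x) (hy : 0 ≤ y) (c : ℝ) :
    min (x ^ 2) (y ^ 2) * c + |x ^ 2 - y ^ 2| ≤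
      3 / 2 * √((x - y) ^ 2 + x * y * c ^ 2) * (x + y) := by
  wlog hyx : y ≤ x generalizing x y
  · have := this hy hx (le_of_not_ge hyx)
    rwa [min_comm, abs_sub_comm, add_comm y, mul_comm y, ← neg_sub x y, neg_sq] at this
  have hsq : y ^ 2 ≤ x ^ 2 := pow_le_pow_left₀ hy hyx 2
  have hA : 0 ≤ (x - y) ^ 2 + x * y * c ^ 2 := by positivity
  rw [min_eq_right hsq, abs_of_nonneg (sub_nonneg.mpr hsq),
    show 3 / 2 * √((x - y) ^ 2 + x * y * c ^ 2) * (x + y) =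
      √(((x - y) ^ 2 + x * y * c ^ 2) * (3 / 2 * (x + y)) ^ 2) by
      rw [Real.sqrt_mul hA, Real.sqrt_sq (by positivity)]; ring]
  apply Real.le_sqrt_of_sq_le
  have h_quartic : 0 ≤ x * y * (x + y) ^ 2 - 4 * y ^ 4 := by
    nlinarith [pow_le_pow_left₀ hy hyx 3, mul_le_mul_of_nonneg_left hsq (mul_nonneg hy hy),
      mul_le_mul_of_nonneg_left hyx (mul_nonneg (mul_nonneg hy hy) hy)]
  nlinarith [sq_nonneg (5 * (x - y) * (x + y) - 4 * y ^ 2 * c), mul_nonneg (sq_nonneg c) h_quartic,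
    mul_nonneg (mul_nonneg (mul_nonneg hx hy) (sq_nonneg c)) (sq_nonneg (x + y))]

theorem min_sq_mul_norm_sub_add_abs_le {E : Type*} [NormedAddCommGroup E] [InnerProductSpace ℝ E]
    {x y : ℝ} (hx : 0 ≤ x) (hy : 0 ≤ y) {σ₁ σ₂ : E} (h₁ : ‖σ₁‖ = 1) (h₂ : ‖σ₂‖ = 1) :
    min (x ^ 2) (y ^ 2) * ‖σ₁ - σ₂‖ + |x ^ 2 - y ^ 2| ≤ 3 / 2 * ‖x • σ₁ - y • σ₂‖ * (x + y) := by
  rw [← Real.sqrt_sq (norm_nonneg (x • σ₁ - y • σ₂)), norm_smul_sub_smul_sq x y h₁ h₂]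
  exact min_sq_mul_add_abs_sq_sub_sq_le hx hy _

section Weights

variable {V : Type*} [Fintype V] {W : V → V → ℝ}

theorem sum_sum_mul_sub_min_eq_of_symm (hW : ∀ u v, W u v = W v u) (a : V → ℝ) :
    ∑ u, ∑ v, W u v * (a u - min (a u) (a v)) = (1 / 2) * ∑ u, ∑ v, W u v * |a u - a v| := by
  have h_swap : ∑ u, ∑ v, W u v * (a u - min (a u) (a v)) =
      ∑ u, ∑ v, W u v * (a v - min (a u) (a v)) := by
    rw [sum_comm]
    simp_rw [hW, min_comm]
  have h_abs : ∀ u v, (a u - min (a u) (a v)) + (a v - min (a u) (a v)) = |a u - a v| :=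
    fun u v => by linarith [min_add_max (a u) (a v), max_sub_min_eq_abs' (a u) (a v)]
  simp_rw [← h_abs, mul_add, sum_add_distrib, ← h_swap]
  ring

theorem sq_sum_sum_mul_mul_le (hW : ∀ u v, 0 ≤ W u v) (X Y : V → V → ℝ) :
    (∑ u, ∑ v, W u v * (X u v * Y u v)) ^ 2 ≤
      (∑ u, ∑ v, W u v * X u v ^ 2) * ∑ u, ∑ v, W u v * Y u v ^ 2 := by
  simp_rw [← Fintype.sum_prod_type']
  exact sum_sq_le_sum_mul_sum_of_sq_le_mul _ (fun p _ => mul_nonneg (hW _ _) (sq_nonneg _))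
    (fun p _ => mul_nonneg (hW _ _) (sq_nonneg _)) fun p _ => le_of_eq (by ring)

theorem sum_sum_mul_add_sq_le (hW_nonneg : ∀ u v, 0 ≤ W u v) (hW_symm : ∀ u v, W u v = W v u)
    (x : V → ℝ) :
    ∑ u, ∑ v, W u v * (x u + x v) ^ 2 ≤ 4 * ∑ u, x u ^ 2 * ∑ v, W u v := by
  have h_swap : ∑ u, ∑ v, W u v * x v ^ 2 = ∑ u, ∑ v, W u v * x u ^ 2 := by
    rw [sum_comm]
    simp_rw [hW_symm]
  calc ∑ u, ∑ v, W u v * (x u + x v) ^ 2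
      ≤ ∑ u, ∑ v, W u v * (2 * (x u ^ 2 + x v ^ 2)) :=
        sum_le_sum fun u _ => sum_le_sum fun v _ =>
          mul_le_mul_of_nonneg_left (by nlinarith [sq_nonneg (x u - x v)]) (hW_nonneg u v)
    _ = 2 * ∑ u, ∑ v, W u v * x u ^ 2 + 2 * ∑ u, ∑ v, W u v * x v ^ 2 := by
        simp only [mul_sum, ← sum_add_distrib]
        exact sum_congr rfl fun u _ => sum_congr rfl fun v _ => by ring
    _ = 4 * ∑ u, x u ^ 2 * ∑ v, W u v := by
        rw [h_swap, ← two_mul, ← mul_assoc, show (2 : ℝ) * 2 = 4 by norm_num]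
        congr 1
        exact sum_congr rfl fun u _ => by rw [mul_sum]; exact sum_congr rfl fun v _ => mul_comm _ _

end Weights

section Graph

variable {V : Type*} {G : SimpleGraph V} [DecidableRel G.Adj] {w : V → V → ℝ}

def edgeWeight (G : SimpleGraph V) [DecidableRel G.Adj] (w : V → V → ℝ) (u v : V) : ℝ :=
  if G.Adj u v then w u v else 0

theorem ite_adj_mul_eq_edgeWeight_mul (u v : V) (x : ℝ) :
    (if G.Adj u v then w u v * x else 0) = edgeWeight G w u v * x := by
  rw [edgeWeight, ite_zero_mul]

theorem edgeWeight_nonneg (hw : ∀ u v, G.Adj u v → 0 < w u v) (u v : V) :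
    0 ≤ edgeWeight G w u v := by
  unfold edgeWeight
  split_ifs with h
  exacts [(hw u v h).le, le_rfl]

theorem edgeWeight_comm (hw : ∀ u v, w u v = w v u) (u v : V) :
    edgeWeight G w u v = edgeWeight G w v u := by
  simp only [edgeWeight, G.adj_comm u v, hw u v]

theorem sum_edgeWeight_le_dmu_mul [Fintype V] {μ : V → ℝ} (hμ : ∀ u, 0 < μ u) (u : V) :
    ∑ v, edgeWeight G w u v ≤ dmu G w μ * μ u :=
  (div_le_iff₀ (hμ u)).mp <|
    le_ciSup (f := fun u => (∑ v, edgeWeight G w u v) / μ u) (Set.finite_range _).bddAbove u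

theorem frusIdx_le [Fintype V] (hw : ∀ u v, G.Adj u v → 0 < w u v) (s : V → V → ℂ) (V1 : Finset V)
    {τ : V → ℂ} (hτ : ∀ u, ‖τ u‖ = 1) :
    frusIdx G w s V1 ≤ (1 / 2) * ∑ u ∈ V1, ∑ v ∈ V1, edgeWeight G w u v * ‖τ u - s u v * τ v‖ := by
  simp_rw [← ite_adj_mul_eq_edgeWeight_mul]
  refine csInf_le ⟨0, ?_⟩ ⟨τ, hτ, rfl⟩
  rintro _ ⟨σ, -, rfl⟩
  simp_rw [ite_adj_mul_eq_edgeWeight_mul]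
  exact mul_nonneg (by norm_num) <| sum_nonneg fun u _ => sum_nonneg fun v _ =>
    mul_nonneg (edgeWeight_nonneg hw u v) (norm_nonneg _)

theorem bdry_eq_sum_edgeWeight [Fintype V] [DecidableEq V] (V1 : Finset V) :
    bdry G w V1 = ∑ u ∈ V1, ∑ v ∈ V1ᶜ, edgeWeight G w u v :=
  rfl

theorem sum_layers_frusIdx_add_bdry_le [Fintype V] [DecidableEq V]
    (hw_sym : ∀ u v, w u v = w v u) (hw_pos : ∀ u v, G.Adj u v → 0 < w u v) (s : V → V → ℂ)
    {a : V → ℝ} {T : Finset ℝ} {δ : ℝ → ℝ} (hδ_nonneg : ∀ t ∈ T, 0 ≤ δ t) (hδ : ∀ u, ∑ t ∈ T with t ≤ a u, δ t = a u)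
    {τ : V → ℂ} (hτ : ∀ u, ‖τ u‖ = 1) :
    ∑ t ∈ T, δ t * (frusIdx G w s {u | t ≤ a u} + bdry G w {u | t ≤ a u}) ≤
      (1 / 2) * ∑ u, ∑ v, edgeWeight G w u v *
        (min (a u) (a v) * ‖τ u - s u v * τ v‖ + |a u - a v|) := by
  calc ∑ t ∈ T, δ t * (frusIdx G w s {u | t ≤ a u} + bdry G w {u | t ≤ a u})
      ≤ ∑ t ∈ T, δ t * ((1 / 2) * ∑ u with t ≤ a u, ∑ v with t ≤ a v,
          edgeWeight G w u v * ‖τ u - s u v * τ v‖ + bdry G w {u | t ≤ a u}) :=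
        sum_le_sum fun t ht => mul_le_mul_of_nonneg_left
          (add_le_add_left (frusIdx_le hw_pos s _ hτ) _) (hδ_nonneg t ht)
    _ = (1 / 2) * ∑ u, ∑ v, edgeWeight G w u v * ‖τ u - s u v * τ v‖ * min (a u) (a v) +
          (1 / 2) * ∑ u, ∑ v, edgeWeight G w u v * |a u - a v| := by
        simp_rw [mul_add, sum_add_distrib, mul_left_comm (δ _) (1 / 2), ← mul_sum,
          sum_layers_sum_sum hδ, bdry_eq_sum_edgeWeight, sum_layers_sum_sum_compl hδ,
          sum_sum_mul_sub_min_eq_of_symm (edgeWeight_comm hw_sym)]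
    _ = _ := by
        rw [← mul_add, ← sum_add_distrib]
        refine congrArg _ <| sum_congr rfl fun u _ => ?_
        rw [← sum_add_distrib]
        exact sum_congr rfl fun v _ => by ring

theorem sum_edgeWeight_mul_min_mul_add_abs_le [Fintype V] (hw_pos : ∀ u v, G.Adj u v → 0 < w u v)
    {s : V → V → ℂ} (hs_unit : ∀ u v, G.Adj u v → ‖s u v‖ = 1) {f τ : V → ℂ}
    (hτ : ∀ u, ‖τ u‖ = 1) (hfτ : ∀ u, (‖f u‖ : ℂ) * τ u = f u) :
    ∑ u, ∑ v, edgeWeight G w u v *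
        (min (‖f u‖ ^ 2) (‖f v‖ ^ 2) * ‖τ u - s u v * τ v‖ + |‖f u‖ ^ 2 - ‖f v‖ ^ 2|) ≤
      3 / 2 * ∑ u, ∑ v, edgeWeight G w u v * (‖f u - s u v * f v‖ * (‖f u‖ + ‖f v‖)) := by
  rw [mul_sum]
  refine sum_le_sum fun u _ => ?_
  rw [mul_sum]
  refine sum_le_sum fun v _ => ?_
  by_cases huv : G.Adj u v
  · have h_edge := min_sq_mul_norm_sub_add_abs_le (norm_nonneg (f u)) (norm_nonneg (f v)) (hτ u)
      (σ₂ := s u v * τ v) (by rw [norm_mul, hs_unit u v huv, hτ v, one_mul])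
    rw [Complex.real_smul, Complex.real_smul, hfτ, mul_left_comm, hfτ] at h_edge
    calc _ ≤ edgeWeight G w u v * (3 / 2 * ‖f u - s u v * f v‖ * (‖f u‖ + ‖f v‖)) :=
          mul_le_mul_of_nonneg_left h_edge (edgeWeight_nonneg hw_pos u v)
      _ = _ := by ring
  · simp [edgeWeight, huv]

theorem sum_edgeWeight_mul_norm_sub_mul_add_le [Fintype V] (hw_sym : ∀ u v, w u v = w v u)
    (hw_pos : ∀ u v, G.Adj u v → 0 < w u v) {μ : V → ℝ} (hμ : ∀ u, 0 < μ u) (s : V → V → ℂ)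
    (f : V → ℂ) (hD : 0 < ∑ u, ‖f u‖ ^ 2 * μ u) :
    ∑ u, ∑ v, edgeWeight G w u v * (‖f u - s u v * f v‖ * (‖f u‖ + ‖f v‖)) ≤
      2 * √(2 * dmu G w μ * rayleigh G w μ s f) * ∑ u, ‖f u‖ ^ 2 * μ u := by
  set D := ∑ u, ‖f u‖ ^ 2 * μ u
  set R := rayleigh G w μ s f
  set N := ∑ u, ∑ v, edgeWeight G w u v * ‖f u - s u v * f v‖ ^ 2
  set P := ∑ u, ∑ v, edgeWeight G w u v * (‖f u‖ + ‖f v‖) ^ 2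
  have hN : N = 2 * R * D := by
    have hR : R = (1 / 2) * N / D := by
      simp only [N, R, D, rayleigh, ite_adj_mul_eq_edgeWeight_mul]
    rw [hR]
    field_simp
  have hN_nonneg : 0 ≤ N := sum_nonneg fun u _ => sum_nonneg fun v _ =>
    mul_nonneg (edgeWeight_nonneg hw_pos u v) (sq_nonneg _)
  have hP : P ≤ 4 * dmu G w μ * D := by
    rw [mul_assoc, mul_sum]
    refine (sum_sum_mul_add_sq_le (edgeWeight_nonneg hw_pos) (edgeWeight_comm hw_sym) _).trans
      (mul_le_mul_of_nonneg_left (sum_le_sum fun u _ => ?_) (by norm_num))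
    calc ‖f u‖ ^ 2 * ∑ v, edgeWeight G w u v ≤ ‖f u‖ ^ 2 * (dmu G w μ * μ u) :=
          mul_le_mul_of_nonneg_left (sum_edgeWeight_le_dmu_mul hμ u) (sq_nonneg _)
      _ = dmu G w μ * (‖f u‖ ^ 2 * μ u) := by ring
  have h_cs := sq_sum_sum_mul_mul_le (edgeWeight_nonneg hw_pos)
    (fun u v => ‖f u - s u v * f v‖) (fun u v => ‖f u‖ + ‖f v‖)
  have h_sq : (∑ u, ∑ v, edgeWeight G w u v * (‖f u - s u v * f v‖ * (‖f u‖ + ‖f v‖))) ^ 2 ≤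
      (2 * D) ^ 2 * (2 * dmu G w μ * R) := by
    refine h_cs.trans ((mul_le_mul_of_nonneg_left hP hN_nonneg).trans_eq ?_)
    rw [hN]
    ring
  refine (Real.le_sqrt_of_sq_le h_sq).trans_eq ?_
  rw [Real.sqrt_mul (sq_nonneg _), Real.sqrt_sq (by positivity)]
  ring

theorem sum_layers_frusIdx_add_bdry_le_sqrt_rayleigh [Fintype V] [DecidableEq V]
    (hw_sym : ∀ u v, w u v = w v u) (hw_pos : ∀ u v, G.Adj u v → 0 < w u v) {μ : V → ℝ}
    (hμ : ∀ u, 0 < μ u) {s : V → V → ℂ} (hs_unit : ∀ u v, G.Adj u v → ‖s u v‖ = 1) {f : V → ℂ}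
    (hD : 0 < ∑ u, ‖f u‖ ^ 2 * μ u) {T : Finset ℝ} {δ : ℝ → ℝ} (hδ_nonneg : ∀ t ∈ T, 0 ≤ δ t)
    (hδ : ∀ u, ∑ t ∈ T with t ≤ ‖f u‖ ^ 2, δ t = ‖f u‖ ^ 2) :
    ∑ t ∈ T, δ t * (frusIdx G w s {u | t ≤ ‖f u‖ ^ 2} + bdry G w {u | t ≤ ‖f u‖ ^ 2}) ≤
      3 / 2 * √(2 * dmu G w μ * rayleigh G w μ s f) * ∑ u, ‖f u‖ ^ 2 * μ u := by
  have hτ (u : V) : ‖Complex.exp (Complex.arg (f u) * Complex.I)‖ = 1 :=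
    Complex.norm_exp_ofReal_mul_I _
  calc _ ≤ _ := sum_layers_frusIdx_add_bdry_le hw_sym hw_pos s hδ_nonneg hδ hτ
    _ ≤ 1 / 2 * (3 / 2 * ∑ u, ∑ v, edgeWeight G w u v *
          (‖f u - s u v * f v‖ * (‖f u‖ + ‖f v‖))) :=
        mul_le_mul_of_nonneg_left (sum_edgeWeight_mul_min_mul_add_abs_le hw_pos hs_unit hτ
          fun u => Complex.norm_mul_exp_arg_mul_I _) (by norm_num)
    _ ≤ 1 / 2 * (3 / 2 * (2 * √(2 * dmu G w μ * rayleigh G w μ s f) *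
          ∑ u, ‖f u‖ ^ 2 * μ u)) := by
        gcongr
        exact sum_edgeWeight_mul_norm_sub_mul_add_le hw_sym hw_pos hμ s f hD
    _ = _ := by ring

end Graph

open scoped Classical

theorem stmt_9_general {V : Type*} [Fintype V] [DecidableEq V]
    (G : SimpleGraph V) [DecidableRel G.Adj]
    (w : V → V → ℝ) (μ : V → ℝ) (s : V → V → ℂ)
    (hw_sym : ∀ u v, w u v = w v u)
    (hw_pos : ∀ u v, G.Adj u v → 0 < w u v)
    (hμ : ∀ u, 0 < μ u)
    (hs_unit : ∀ u v, G.Adj u v → ‖s u v‖ = 1)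
    (f : V → ℂ) (hf : f ≠ 0) :
    ∃ t' : ℝ, 0 ≤ t' ∧ t' ≤ (⨆ u : V, ‖f u‖ ^ 2) ∧
      (frusIdx G w s (Finset.univ.filter fun u => Real.sqrt t' ≤ ‖f u‖) +
          bdry G w (Finset.univ.filter fun u => Real.sqrt t' ≤ ‖f u‖)) /
        vol μ (Finset.univ.filter fun u => Real.sqrt t' ≤ ‖f u‖) ≤
      (3 / 2) * Real.sqrt (2 * dmu G w μ * rayleigh G w μ s f) := by
  set a : V → ℝ := fun u => ‖f u‖ ^ 2
  set K := 3 / 2 * √(2 * dmu G w μ * rayleigh G w μ s f)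
  obtain ⟨T, δ, hT, hδ⟩ := exists_layer_decomposition a fun u => sq_nonneg _
  have hD : 0 < ∑ u, a u * μ u := by
    obtain ⟨u, hu⟩ := Function.ne_iff.mp hf
    exact sum_pos' (fun v _ => mul_nonneg (sq_nonneg _) (hμ v).le)
      ⟨u, mem_univ u, mul_pos (pow_pos (norm_pos_iff.mpr hu) 2) (hμ u)⟩
  have h_vol : ∑ t ∈ T, δ t * vol μ {u | t ≤ a u} = ∑ u, a u * μ u :=
    (sum_layers_sum_filter hδ μ).trans (sum_congr rfl fun u _ => mul_comm _ _)
  have h_num : ∑ t ∈ T, δ t * (frusIdx G w s {u | t ≤ a u} + bdry G w {u | t ≤ a u}) ≤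
      ∑ t ∈ T, δ t * (K * vol μ {u | t ≤ a u}) := by
    refine (sum_layers_frusIdx_add_bdry_le_sqrt_rayleigh hw_sym hw_pos hμ hs_unit hD
      (fun t ht => (hT t ht).1.le) hδ).trans_eq ?_
    simp_rw [mul_left_comm (δ _), ← mul_sum, h_vol]
    rfl
  have hT_ne : T.Nonempty := by
    refine nonempty_iff_ne_empty.mpr fun hT_empty => hD.ne ?_
    rw [← h_vol, hT_empty, sum_empty]
  obtain ⟨t, ht, h_le⟩ := exists_le_of_sum_le hT_ne h_num
  obtain ⟨hδ_pos, u, rfl⟩ := hT t ht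
  have h_level : ({v | √(a u) ≤ ‖f v‖} : Finset V) = ({v | a u ≤ a v} : Finset V) :=
    filter_congr fun v _ => Real.sqrt_le_left (norm_nonneg _)
  have h_vol_pos : 0 < vol μ {v | a u ≤ a v} := sum_pos (fun v _ => hμ v) ⟨u, by simp⟩
  refine ⟨a u, sq_nonneg _, le_ciSup (Set.finite_range a).bddAbove u, ?_⟩
  rw [h_level, div_le_iff₀ h_vol_pos]
  exact le_of_mul_le_mul_left h_le hδ_pos

theorem stmt_9 {V : Type*} [Fintype V] [DecidableEq V] [Nonempty V]
    (G : SimpleGraph V) [DecidableRel G.Adj]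
    (w : V → V → ℝ) (μ : V → ℝ) (s : V → V → ℂ)
    (hw_sym : ∀ u v, w u v = w v u)
    (hw_pos : ∀ u v, G.Adj u v → 0 < w u v)
    (hμ : ∀ u, 0 < μ u)
    (hs_unit : ∀ u v, G.Adj u v → ‖s u v‖ = 1)
    (hs_inv : ∀ u v, G.Adj u v → s v u = (s u v)⁻¹)
    (f : V → ℂ) (hf : f ≠ 0) :
    ∃ t' : ℝ, 0 ≤ t' ∧ t' ≤ (⨆ u : V, ‖f u‖ ^ 2) ∧
      (frusIdx G w s (Finset.univ.filter fun u => Real.sqrt t' ≤ ‖f u‖) +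
          bdry G w (Finset.univ.filter fun u => Real.sqrt t' ≤ ‖f u‖)) /
        vol μ (Finset.univ.filter fun u => Real.sqrt t' ≤ ‖f u‖) ≤
      (3 / 2) * Real.sqrt (2 * dmu G w μ * rayleigh G w μ s f) :=
  stmt_9_general G w μ s hw_sym hw_pos hμ hs_unit f hf
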